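/- Let K/L be a finite extension of H-graded fields and R a graded valuation ring of L. The map A ↦ A₁ = A ∩ K₁ is a bijection between the set of graded valuation rings of K extending R and the set of valuation rings of the field K₁ extending the valuation ring R₁ = R ∩ L₁ of L₁. Moreover, for graded valuation rings R ⊆ R' of L with respective extensions A, A' to K, one has A ⊆ A' if and only if A₁ ⊆ A'₁. -/

import Mathlib

open scoped DirectSum

/-- An `H`-graded field: a nonzero commutative ring with an internal grading by the
commutative group `H` in which every nonzero homogeneous element is invertible
(with homogeneous inverse). -/
structure GradedField (H : Type*) [CommGroup H] [DecidableEq H] (K : Type*) [CommRing K] where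
  comp : H → AddSubgroup K
  one_mem : (1 : K) ∈ comp 1
  mul_mem : ∀ {g h : H} {x y : K}, x ∈ comp g → y ∈ comp h → x * y ∈ comp (g * h)
  isInternal : DirectSum.IsInternal fun h : H => comp h
  zero_ne_one : (0 : K) ≠ 1
  inv_mem : ∀ {h : H} {x : K}, x ∈ comp h → x ≠ 0 → ∃ y ∈ comp h⁻¹, x * y = 1

namespace GradedField

variable {H : Type*} [CommGroup H] [DecidableEq H] {K : Type*} [CommRing K] (F : GradedField H K)

/-- A homogeneous element. -/
def Homogeneous (x : K) : Prop := ∃ h, x ∈ F.comp h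

/-- A subring is graded if each of its elements is a sum of homogeneous elements of the
subring. -/
def IsGradedSubring (R : Subring K) : Prop :=
  ∀ x ∈ R, x ∈ AddSubgroup.closure {y : K | y ∈ R ∧ F.Homogeneous y}

/-- A graded subfield: a graded subring closed under inverses of nonzero homogeneous
elements. -/
structure IsGradedSubfield (L : Subring K) : Prop where
  graded : F.IsGradedSubring L
  inv_mem : ∀ x ∈ L, F.Homogeneous x → x ≠ 0 → Ring.inverse x ∈ L

/-- A graded valuation ring of the graded subfield `L`: a graded subring `R ⊆ L` such that
every nonzero homogeneous element of `L` lies in `R` or has its inverse in `R`. -/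
def IsGradedValRing (L R : Subring K) : Prop :=
  R ≤ L ∧ F.IsGradedSubring R ∧
    ∀ x ∈ L, F.Homogeneous x → x ≠ 0 → (x ∈ R ∨ Ring.inverse x ∈ R)

/-- The identity component `K₁`, as a subring. -/
def oneComponent : Subring K where
  carrier := F.comp 1
  one_mem' := F.one_mem
  mul_mem' := fun ha hb => by simpa using F.mul_mem ha hb
  add_mem' := fun ha hb => (F.comp 1).add_mem ha hb
  zero_mem' := (F.comp 1).zero_mem
  neg_mem' := fun ha => (F.comp 1).neg_mem ha

theorem mem_oneComponent {x : K} : x ∈ F.oneComponent ↔ x ∈ F.comp 1 := Iff.rfl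

/-- The value group `ρ(L^×) ⊆ H` of a graded subfield `L`. -/
def valueGroup (L : Subring K)
    (hL : ∀ x ∈ L, F.Homogeneous x → x ≠ 0 → Ring.inverse x ∈ L) : Subgroup H where
  carrier := {h | ∃ x ∈ F.comp h, x ≠ 0 ∧ x ∈ L}
  one_mem' := ⟨1, F.one_mem, Ne.symm F.zero_ne_one, L.one_mem⟩
  mul_mem' := by
    rintro g h ⟨x, hx, hx0, hxL⟩ ⟨y, hy, hy0, hyL⟩
    obtain ⟨x', hx', hxx'⟩ := F.inv_mem hx hx0
    obtain ⟨y', hy', hyy'⟩ := F.inv_mem hy hy0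
    refine ⟨x * y, F.mul_mem hx hy, ?_, L.mul_mem hxL hyL⟩
    intro h0
    have h1 : x * y * (x' * y') = 1 := by rw [mul_mul_mul_comm, hxx', hyy', one_mul]
    rw [h0, zero_mul] at h1
    exact F.zero_ne_one h1
  inv_mem' := by
    rintro g ⟨x, hx, hx0, hxL⟩
    obtain ⟨y, hy, hxy⟩ := F.inv_mem hx hx0
    have hu : IsUnit x := IsUnit.of_mul_eq_one y hxy
    have hyx : Ring.inverse x = y := by
      calc Ring.inverse x = Ring.inverse x * (x * y) := by rw [hxy, mul_one]
        _ = Ring.inverse x * x * y := by ring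
        _ = y := by rw [Ring.inverse_mul_cancel x hu, one_mul]
    refine ⟨y, hy, ?_, ?_⟩
    · intro h0; rw [h0, mul_zero] at hxy; exact F.zero_ne_one hxy
    · rw [← hyx]; exact hL x hxL ⟨g, hx⟩ hx0

/-- The value group `ρ(K^×)` of the whole graded field. -/
def fullValueGroup : Subgroup H :=
  F.valueGroup ⊤ (fun _ _ _ _ => Subring.mem_top _)

/-- `K₁` as a module over `L₁ = K₁ ∩ L`. -/
def oneSubmodule (L : Subring K) : Submodule ↥(F.oneComponent ⊓ L) K where
  carrier := F.comp 1
  add_mem' := fun ha hb => (F.comp 1).add_mem ha hb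
  zero_mem' := (F.comp 1).zero_mem
  smul_mem' := fun c x hx => by
    have hc : (c : K) ∈ F.comp 1 := ((Subring.mem_inf).mp c.2).1
    have := F.mul_mem hc hx
    simpa [Subring.smul_def] using this

/-- A graded automorphism: a ring automorphism preserving each graded component. -/
def IsGradedAut (σ : RingAut K) : Prop := ∀ (h : H) (x : K), x ∈ F.comp h → σ x ∈ F.comp h

end GradedField

/-- The fixed subring `K^G` of a group of ring automorphisms. -/
def fixedSubring {K : Type*} [CommRing K] (G : Subgroup (RingAut K)) : Subring K where
  carrier := {x | ∀ σ ∈ G, σ x = x}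
  one_mem' := fun σ _ => map_one σ
  mul_mem' := fun ha hb σ hσ => by rw [map_mul, ha σ hσ, hb σ hσ]
  add_mem' := fun ha hb σ hσ => by rw [map_add, ha σ hσ, hb σ hσ]
  zero_mem' := fun σ _ => map_zero σ
  neg_mem' := fun ha σ hσ => by rw [map_neg, ha σ hσ]

theorem mem_fixedSubring {K : Type*} [CommRing K] {G : Subgroup (RingAut K)} {x : K} :
    x ∈ fixedSubring G ↔ ∀ σ ∈ G, σ x = x := Iff.rfl


namespace GradedField

variable {H : Type*} [CommGroup H] [DecidableEq H] {K : Type*} [CommRing K]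
variable (F : GradedField H K)

/-- Decomposition of an element into its homogeneous components. -/
noncomputable def decompose (x : K) : ⨁ h : H, ↥(F.comp h) :=
  (Equiv.ofBijective _ F.isInternal).symm x

/-- The degree-`h` homogeneous component of `x`. -/
noncomputable def component (h : H) (x : K) : K := (F.decompose x h : K)

/-- The inertia subgroup of `G`: graded automorphisms in `G` acting trivially on `K₁`. -/
def inertia (G : Subgroup (RingAut K)) : Subgroup (RingAut K) where
  carrier := {σ | σ ∈ G ∧ ∀ x ∈ F.comp 1, σ x = x}
  one_mem' := ⟨G.one_mem, fun _ _ => rfl⟩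
  mul_mem' := fun {a b} ha hb => ⟨G.mul_mem ha.1 hb.1, fun x hx => by
    show a (b x) = x
    rw [hb.2 x hx, ha.2 x hx]⟩
  inv_mem' := fun {a} ha => ⟨G.inv_mem ha.1, fun x hx => by
    conv_lhs => rw [← ha.2 x hx]
    exact a.symm_apply_apply x⟩

theorem mem_inertia {G : Subgroup (RingAut K)} {σ : RingAut K} :
    σ ∈ F.inertia G ↔ σ ∈ G ∧ ∀ x ∈ F.comp 1, σ x = x := Iff.rfl

end GradedField

/-- A subring `S` containing a subring `L`, viewed as an `L`-submodule of the ambient ring. -/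
def Subring.toSubmoduleOver {K : Type*} [CommRing K] (L S : Subring K) (hLS : L ≤ S) :
    Submodule ↥L K where
  carrier := S
  add_mem' := fun ha hb => S.add_mem ha hb
  zero_mem' := S.zero_mem
  smul_mem' := fun c x hx => S.mul_mem (hLS c.2) hx

section ZR

variable {H : Type*} [CommGroup H] [DecidableEq H] {K : Type*} [CommRing K]

/-- The Zariski–Riemann space of graded valuation rings of `K` containing `k₀`. -/
def GradedField.ZR (F : GradedField H K) (k₀ : Subring K) : Type _ :=
  {O : Subring K // F.IsGradedValRing ⊤ O ∧ k₀ ≤ O}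

/-- The set of homogeneous units (nonzero homogeneous elements) of `K`. -/
def GradedField.HomogUnits (F : GradedField H K) : Type _ :=
  {x : K // x ≠ 0 ∧ F.Homogeneous x}

open Classical in
/-- The embedding of the Zariski–Riemann space into `{0,1}^{K^×}` via characteristic
functions. -/
noncomputable def GradedField.chi (F : GradedField H K) (k₀ : Subring K) (O : F.ZR k₀) :
    F.HomogUnits → Bool :=
  fun x => decide (x.1 ∈ O.1)

/-- Basic open sets `P{F}∖{G}` of the constructible topology, for finite sets `F`, `G` of
homogeneous units. -/
def GradedField.constructibleBasis (F : GradedField H K) (k₀ : Subring K) :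
    Set (Set (F.ZR k₀)) :=
  {s | ∃ Fs Gs : Finset K, (∀ a ∈ Fs, a ≠ 0 ∧ F.Homogeneous a) ∧
    (∀ b ∈ Gs, b ≠ 0 ∧ F.Homogeneous b) ∧
    s = {O : F.ZR k₀ | (∀ a ∈ Fs, a ∈ O.1) ∧ ∀ b ∈ Gs, b ∉ O.1}}

/-- The constructible topology on the Zariski–Riemann space. -/
def GradedField.constructibleTop (F : GradedField H K) (k₀ : Subring K) :
    TopologicalSpace (F.ZR k₀) :=
  TopologicalSpace.generateFrom (F.constructibleBasis k₀)


/-!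
Since `K` has finite rank over `L`, the powers of a nonzero homogeneous `u ∈ K` are linearly
dependent over `L`, and a suitable homogeneous component of such a relation is a vanishing sum of
terms `bᵢ uⁱ` of a single degree, not all zero, with `bᵢ ∈ L` homogeneous. For a valuation ring
`B` of `K₁` the ultrametric inequality forces two nonzero terms to have a ratio that is a unit
of `B`, which gives `uⁿ = z w` with `n > 0`, `z ∈ L` homogeneous and `w ∈ Bˣ`.

For a graded valuation ring `A` this puts every homogeneous `u ∈ A` into any graded valuation
ring containing `A ∩ L` and `A₁`, which gives injectivity and the comparison of extensions.
Conversely, given `B`, the homogeneous elements with a positive power `z w`, `z ∈ R` homogeneous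
and `w ∈ B`, span the graded valuation ring extending `R` with identity component `B`.
-/

open scoped Ring

theorem Ring.inverse_mul_inverse {M₀ : Type*} [CommMonoidWithZero M₀] (x : M₀) {y : M₀}
    (hy : IsUnit y) : (x * y⁻¹ʳ)⁻¹ʳ = y * x⁻¹ʳ := by
  rw [Ring.mul_inverse_rev, Ring.inverse_inverse hy]

namespace Subring

variable {R : Type*} [CommRing R]

theorem mem_of_pow_mem_of_inverse_mem (S : Subring R) {u : R} (hu : IsUnit u) {n : ℕ}
    (hn : 0 < n) (hpow : u ^ n ∈ S) (hinv : u⁻¹ʳ ∈ S) : u ∈ S := by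
  obtain ⟨m, rfl⟩ := Nat.exists_eq_add_of_lt hn
  have hu_eq : u = u ^ (0 + m + 1) * u⁻¹ʳ ^ m :=
    calc u = u * (u * u⁻¹ʳ) ^ m := by rw [Ring.mul_inverse_cancel u hu, one_pow, mul_one]
      _ = u ^ (0 + m + 1) * u⁻¹ʳ ^ m := by ring
  rw [hu_eq]
  exact S.mul_mem hpow (S.pow_mem hinv m)

theorem inverse_mem_of_mul_inverse_mem (S : Subring R) {a b : R} (hb : IsUnit b)
    (hab : IsUnit (a + b)) (h : a * b⁻¹ʳ ∈ S) (h' : (a + b)⁻¹ʳ ∈ S) : b⁻¹ʳ ∈ S := by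
  have hb_eq : b⁻¹ʳ = (a * b⁻¹ʳ + 1) * (a + b)⁻¹ʳ := by
    linear_combination (-b⁻¹ʳ) * Ring.mul_inverse_cancel _ hab +
      (a + b)⁻¹ʳ * Ring.mul_inverse_cancel _ hb
  rw [hb_eq]
  exact S.mul_mem (S.add_mem h S.one_mem) h'

theorem exists_sum_mul_pow_eq_zero [Nontrivial R] (L : Subring R)
    (hfin : Module.rank L R < Cardinal.aleph0) (x : R) :
    ∃ s : Finset ℕ, ∃ a : ℕ → L, ∑ i ∈ s, (a i : R) * x ^ i = 0 ∧ ∃ j ∈ s, a j ≠ 0 := by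
  have hdep : ¬LinearIndependent L (fun i : ℕ ↦ x ^ i) :=
    fun hli ↦ hfin.not_ge hli.aleph0_le_rank
  exact not_linearIndependent_iff.1 hdep

end Subring

namespace GradedField

theorem nontrivial (F : GradedField H K) : Nontrivial K := ⟨⟨0, 1, F.zero_ne_one⟩⟩

theorem ne_zero_of_isUnit (F : GradedField H K) {x : K} (hx : IsUnit x) : x ≠ 0 :=
  have := F.nontrivial
  hx.ne_zero

variable (F : GradedField H K)

theorem isUnit_of_mem {h : H} {x : K} (hx : x ∈ F.comp h) (hx0 : x ≠ 0) : IsUnit x :=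
  let ⟨y, _, hxy⟩ := F.inv_mem hx hx0
  .of_mul_eq_one y hxy

theorem inverse_mem {h : H} {x : K} (hx : x ∈ F.comp h) : x⁻¹ʳ ∈ F.comp h⁻¹ := by
  by_cases hx0 : x = 0
  · rw [hx0, Ring.inverse_zero]
    exact zero_mem _
  obtain ⟨y, hy, hxy⟩ := F.inv_mem hx hx0
  have hinv : x⁻¹ʳ = y := by
    simpa using (Ring.inverse_mul_eq_iff_eq_mul x 1 y (F.isUnit_of_mem hx hx0)).2 hxy.symm
  rwa [hinv]

theorem pow_mem {h : H} {x : K} (hx : x ∈ F.comp h) (n : ℕ) : x ^ n ∈ F.comp (h ^ n) := by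
  induction n with
  | zero => rw [pow_zero, pow_zero]; exact F.one_mem
  | succ n ih => rw [pow_succ, pow_succ]; exact F.mul_mem ih hx

theorem mul_inverse_mem_one {g : H} {x y : K} (hx : x ∈ F.comp g) (hy : y ∈ F.comp g) :
    x * y⁻¹ʳ ∈ F.comp 1 := by
  simpa using F.mul_mem hx (F.inverse_mem hy)

variable {F} in
theorem Homogeneous.mul {x y : K} (hx : F.Homogeneous x) (hy : F.Homogeneous y) :
    F.Homogeneous (x * y) :=
  let ⟨_, hx⟩ := hx; let ⟨_, hy⟩ := hy; ⟨_, F.mul_mem hx hy⟩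

variable {F} in
theorem Homogeneous.pow {x : K} (hx : F.Homogeneous x) (n : ℕ) : F.Homogeneous (x ^ n) :=
  let ⟨_, hx⟩ := hx; ⟨_, F.pow_mem hx n⟩

noncomputable instance : DirectSum.Decomposition F.comp := F.isInternal.chooseDecomposition

theorem component_eq_decompose (g : H) (x : K) :
    F.component g x = (DirectSum.decompose F.comp x g : K) := rfl

theorem component_mem (g : H) (x : K) : F.component g x ∈ F.comp g :=
  (DirectSum.decompose F.comp x g).2

theorem component_of_mem_same {g : H} {x : K} (hx : x ∈ F.comp g) : F.component g x = x :=
  DirectSum.decompose_of_mem_same F.comp hx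

theorem component_of_mem_ne {g g' : H} {x : K} (hx : x ∈ F.comp g) (h : g ≠ g') :
    F.component g' x = 0 :=
  DirectSum.decompose_of_mem_ne F.comp hx h

noncomputable def componentHom (g : H) : K →+ K :=
  (F.comp g).subtype.comp ((DFinsupp.evalAddMonoidHom g).comp
    (DirectSum.decomposeAddEquiv F.comp).toAddMonoidHom)

theorem componentHom_apply (g : H) (x : K) : F.componentHom g x = F.component g x := rfl

theorem sum_component (x : K) : ∃ s : Finset H, ∑ g ∈ s, F.component g x = x := by
  classical
  exact ⟨_, DirectSum.sum_support_decompose F.comp x⟩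

theorem exists_component_ne_zero {x : K} (hx : x ≠ 0) : ∃ g, F.component g x ≠ 0 := by
  by_contra! h
  obtain ⟨s, hs⟩ := F.sum_component x
  exact hx (by rw [← hs]; exact Finset.sum_eq_zero fun g _ ↦ h g)

theorem component_mul_of_mem {d : H} {c : K} (hc : c ∈ F.comp d) (g : H) (x : K) :
    F.component (g * d) (x * c) = F.component g x * c := by
  induction x using DirectSum.Decomposition.inductionOn F.comp with
  | zero => simp [← componentHom_apply]
  | @homogeneous i m =>
    obtain ⟨x, hx⟩ := m
    by_cases hg : i = g
    · subst hg
      rw [F.component_of_mem_same hx, F.component_of_mem_same (F.mul_mem hx hc)]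
    · rw [F.component_of_mem_ne hx hg, F.component_of_mem_ne (F.mul_mem hx hc)
        (fun h ↦ hg (mul_right_cancel h)), zero_mul]
  | add x y hx hy =>
    simp only [add_mul, ← componentHom_apply, map_add] at hx hy ⊢
    rw [hx, hy]

variable {F} in
theorem IsGradedSubring.isHomogeneous {S : Subring K} (hS : F.IsGradedSubring S) :
    DirectSum.SetLike.IsHomogeneous F.comp S := by
  intro g x hx
  have hcl := hS x hx
  clear hx
  induction hcl using AddSubgroup.closure_induction with
  | mem y hy =>
    obtain ⟨hyS, h, hyh⟩ := hy
    rw [← component_eq_decompose]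
    by_cases hg : h = g
    · subst hg
      rwa [F.component_of_mem_same hyh]
    · rw [F.component_of_mem_ne hyh hg]
      exact S.zero_mem
  | zero => simp
  | add y z _ _ hy hz => simpa using S.add_mem hy hz
  | neg y _ hy =>
    simpa only [← component_eq_decompose, ← componentHom_apply, map_neg] using S.neg_mem hy

theorem isGradedSubring_of_isHomogeneous {S : Subring K}
    (hS : DirectSum.SetLike.IsHomogeneous F.comp S) : F.IsGradedSubring S := by
  intro x hx
  obtain ⟨s, hs⟩ := F.sum_component x
  rw [← hs]
  exact sum_mem fun g _ ↦ AddSubgroup.subset_closure ⟨hS g hx, g, F.component_mem g x⟩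

variable {F} in
theorem IsGradedSubring.le_of_forall_mem_comp {S T : Subring K} (hS : F.IsGradedSubring S)
    (h : ∀ g, ∀ x ∈ F.comp g, x ∈ S → x ∈ T) : S ≤ T := fun x hx ↦ by
  obtain ⟨s, hs⟩ := F.sum_component x
  rw [← hs]
  exact sum_mem fun g _ ↦ h g _ (F.component_mem g x) (hS.isHomogeneous g hx)

noncomputable def subringOfComponents (Q : H → AddSubgroup K) (hQ : ∀ g, Q g ≤ F.comp g)
    (one_mem : (1 : K) ∈ Q 1) (mul_mem : ∀ ⦃g h x y⦄, x ∈ Q g → y ∈ Q h → x * y ∈ Q (g * h)) :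
    Subring K :=
  { ⨅ g, (Q g).comap (F.componentHom g) with
    one_mem' := by
      refine AddSubgroup.mem_iInf.2 fun g ↦ ?_
      by_cases hg : (1 : H) = g
      · subst hg
        simpa [componentHom_apply, F.component_of_mem_same F.one_mem] using one_mem
      · simp [componentHom_apply, F.component_of_mem_ne F.one_mem hg]
    mul_mem' := by
      intro x y hx hy
      show x * y ∈ ⨅ g, (Q g).comap (F.componentHom g)
      obtain ⟨s, hs⟩ := F.sum_component y
      rw [← hs, Finset.mul_sum]
      refine sum_mem fun h _ ↦ AddSubgroup.mem_iInf.2 fun g ↦ ?_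
      have hyh : F.component h y ∈ Q h := AddSubgroup.mem_iInf.1 hy h
      have hxg : F.component (g * h⁻¹) x ∈ Q (g * h⁻¹) := AddSubgroup.mem_iInf.1 hx (g * h⁻¹)
      have hcomp := F.component_mul_of_mem (hQ h hyh) (g * h⁻¹) x
      rw [inv_mul_cancel_right] at hcomp
      show F.component g _ ∈ Q g
      rw [hcomp]
      simpa using mul_mem hxg hyh }

section subringOfComponents

variable {F} {Q : H → AddSubgroup K} {hQ : ∀ g, Q g ≤ F.comp g} {one_mem : (1 : K) ∈ Q 1}
  {mul_mem : ∀ ⦃g h x y⦄, x ∈ Q g → y ∈ Q h → x * y ∈ Q (g * h)}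

theorem mem_subringOfComponents_of_mem {g : H} {x : K} (hx : x ∈ F.comp g) :
    x ∈ F.subringOfComponents Q hQ one_mem mul_mem ↔ x ∈ Q g := by
  refine ⟨fun h ↦ ?_, fun h ↦ AddSubgroup.mem_iInf.2 fun g' ↦ ?_⟩
  · simpa [componentHom_apply, F.component_of_mem_same hx] using AddSubgroup.mem_iInf.1 h g
  · by_cases hg : g = g'
    · subst hg
      simpa [componentHom_apply, F.component_of_mem_same hx] using h
    · simp [componentHom_apply, F.component_of_mem_ne hx hg]

theorem isGradedSubring_subringOfComponents :
    F.IsGradedSubring (F.subringOfComponents Q hQ one_mem mul_mem) :=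
  F.isGradedSubring_of_isHomogeneous fun g _ hx ↦
    (mem_subringOfComponents_of_mem (F.component_mem g _)).2 (AddSubgroup.mem_iInf.1 hx g)

end subringOfComponents

/-- Together with `B ≤ K₁`, this says that `B` is a valuation ring of the field `K₁`. -/
def IsValuativeOnOne (B : Subring K) : Prop :=
  ∀ x ∈ F.comp 1, x ≠ 0 → x ∈ B ∨ x⁻¹ʳ ∈ B

section IsValuativeOnOne

variable {F} {B : Subring K}

theorem inverse_mem_or_inverse_mem_of_inverse_add_mem (hB : F.IsValuativeOnOne B) {a b : K}
    (ha : a ∈ F.comp 1) (hb : b ∈ F.comp 1) (hab0 : a + b ≠ 0) (hab : (a + b)⁻¹ʳ ∈ B) :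
    (a ≠ 0 ∧ a⁻¹ʳ ∈ B) ∨ (b ≠ 0 ∧ b⁻¹ʳ ∈ B) := by
  by_cases ha0 : a = 0
  · rw [ha0, zero_add] at hab0 hab
    exact .inr ⟨hab0, hab⟩
  by_cases hb0 : b = 0
  · rw [hb0, add_zero] at hab0 hab
    exact .inl ⟨hab0, hab⟩
  have hua := F.isUnit_of_mem ha ha0
  have hub := F.isUnit_of_mem hb hb0
  have huab := F.isUnit_of_mem ((F.comp 1).add_mem ha hb) hab0
  rcases hB _ (F.mul_inverse_mem_one ha hb) (F.ne_zero_of_isUnit (hua.mul hub.ringInverse))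
    with h | h
  · exact .inr ⟨hb0, B.inverse_mem_of_mul_inverse_mem hub huab h hab⟩
  · rw [Ring.inverse_mul_inverse a hub] at h
    rw [add_comm] at huab hab
    exact .inl ⟨ha0, B.inverse_mem_of_mul_inverse_mem hua huab h hab⟩

theorem exists_inverse_mem_of_inverse_sum_mem (hB : F.IsValuativeOnOne B) {ι : Type*}
    (s : Finset ι) {r : ι → K} (hr : ∀ i ∈ s, r i ∈ F.comp 1) (h0 : ∑ i ∈ s, r i ≠ 0)
    (h : (∑ i ∈ s, r i)⁻¹ʳ ∈ B) : ∃ i ∈ s, r i ≠ 0 ∧ (r i)⁻¹ʳ ∈ B := by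
  classical
  induction s using Finset.induction_on with
  | empty => simp at h0
  | insert a s ha ih =>
    rw [Finset.sum_insert ha] at h0 h
    have hrs : ∀ i ∈ s, r i ∈ F.comp 1 := fun i hi ↦ hr i (Finset.mem_insert_of_mem hi)
    rcases inverse_mem_or_inverse_mem_of_inverse_add_mem hB (hr a (Finset.mem_insert_self a s))
      (sum_mem hrs) h0 h with hra | ⟨hs0, hs⟩
    · exact ⟨a, Finset.mem_insert_self a s, hra⟩
    · obtain ⟨i, hi, hri⟩ := ih hrs hs0 hs
      exact ⟨i, Finset.mem_insert_of_mem hi, hri⟩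

theorem exists_forall_mul_inverse_mem (hB : F.IsValuativeOnOne B) {ι : Type*} {e : H}
    {s : Finset ι} (hs : s.Nonempty) {t : ι → K} (ht : ∀ i ∈ s, t i ∈ F.comp e ∧ t i ≠ 0) :
    ∃ i ∈ s, ∀ k ∈ s, t k * (t i)⁻¹ʳ ∈ B := by
  induction hs using Finset.Nonempty.cons_induction with
  | singleton a =>
    refine ⟨a, Finset.mem_singleton_self a, fun k hk ↦ ?_⟩
    have hta := ht a (Finset.mem_singleton_self a)
    rw [Finset.mem_singleton.1 hk, Ring.mul_inverse_cancel _ (F.isUnit_of_mem hta.1 hta.2)]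
    exact B.one_mem
  | cons a s has hs ih =>
    obtain ⟨i, hi, hmin⟩ := ih fun k hk ↦ ht k (Finset.mem_cons_of_mem hk)
    have hta := ht a (Finset.mem_cons_self a s)
    have hti := ht i (Finset.mem_cons_of_mem hi)
    have hua := F.isUnit_of_mem hta.1 hta.2
    have hui := F.isUnit_of_mem hti.1 hti.2
    rcases hB _ (F.mul_inverse_mem_one hta.1 hti.1) (F.ne_zero_of_isUnit (hua.mul hui.ringInverse))
      with h | h
    · refine ⟨i, Finset.mem_cons_of_mem hi, fun k hk ↦ ?_⟩
      rcases Finset.mem_cons.1 hk with rfl | hk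
      exacts [h, hmin k hk]
    · rw [Ring.inverse_mul_inverse _ hui] at h
      refine ⟨a, Finset.mem_cons_self a s, fun k hk ↦ ?_⟩
      rcases Finset.mem_cons.1 hk with rfl | hk
      · rw [Ring.mul_inverse_cancel _ hua]
        exact B.one_mem
      · rw [← Ring.inverse_mul_cancel_left _ (t a)⁻¹ʳ hui, ← mul_assoc]
        exact B.mul_mem (hmin k hk) h

/-- Dividing by a term `t l` of least value, the other quotients lie in `B` and sum to `-1`, so
one of them is a unit of `B`. -/
theorem exists_ne_mul_inverse_mem_of_sum_eq_zero (hB : F.IsValuativeOnOne B) {ι : Type*} {e : H}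
    (s : Finset ι) {t : ι → K} (ht : ∀ i ∈ s, t i ∈ F.comp e) (hsum : ∑ i ∈ s, t i = 0)
    (hne : ∃ j ∈ s, t j ≠ 0) :
    ∃ k ∈ s, ∃ l ∈ s, k ≠ l ∧ t k ≠ 0 ∧ t l ≠ 0 ∧ t k * (t l)⁻¹ʳ ∈ B ∧ t l * (t k)⁻¹ʳ ∈ B := by
  classical
  set s' := s.filter (t · ≠ 0)
  have ht' : ∀ i ∈ s', t i ∈ F.comp e ∧ t i ≠ 0 := fun i hi ↦
    ⟨ht i (Finset.mem_filter.1 hi).1, (Finset.mem_filter.1 hi).2⟩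
  obtain ⟨j, hj, htj⟩ := hne
  obtain ⟨l, hl, hmin⟩ := exists_forall_mul_inverse_mem hB ⟨j, Finset.mem_filter.2 ⟨hj, htj⟩⟩ ht'
  have hul := F.isUnit_of_mem (ht' l hl).1 (ht' l hl).2
  have hsum' : ∑ k ∈ s'.erase l, t k * (t l)⁻¹ʳ = -1 := by
    rw [← Finset.sum_mul, Finset.sum_erase_eq_sub hl, Finset.sum_filter_ne_zero, hsum, zero_sub,
      neg_mul, Ring.mul_inverse_cancel _ hul]
  have hunit : (-1 : K)⁻¹ʳ = -1 := by simpa using Ring.inverse_unit (-1 : Kˣ)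
  obtain ⟨k, hk, -, hkl⟩ := exists_inverse_mem_of_inverse_sum_mem hB (s'.erase l)
    (fun k hk ↦ F.mul_inverse_mem_one (ht' k (Finset.mem_of_mem_erase hk)).1 (ht' l hl).1)
    (by rw [hsum']; exact neg_ne_zero.2 (F.ne_zero_of_isUnit isUnit_one))
    (by rw [hsum', hunit]; exact B.neg_mem B.one_mem)
  have hks := Finset.mem_of_mem_erase hk
  rw [Ring.inverse_mul_inverse _ hul] at hkl
  exact ⟨k, (Finset.mem_filter.1 hks).1, l, (Finset.mem_filter.1 hl).1, Finset.ne_of_mem_erase hk,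
    (ht' k hks).2, (ht' l hl).2, hmin k hks, hkl⟩

end IsValuativeOnOne

theorem exists_homogeneous_sum_mul_pow_eq_zero {L : Subring K} (hL : F.IsGradedSubring L)
    (hfin : Module.rank L K < Cardinal.aleph0) {h : H} {u : K} (hu : u ∈ F.comp h) :
    ∃ (e : H) (s : Finset ℕ) (b : ℕ → K), (∀ i, b i ∈ L ∧ b i ∈ F.comp (e * (h ^ i)⁻¹)) ∧
      ∑ i ∈ s, b i * u ^ i = 0 ∧ ∃ j ∈ s, b j ≠ 0 := by
  have := F.nontrivial
  obtain ⟨s, a, hsum, j, hj, haj⟩ := L.exists_sum_mul_pow_eq_zero hfin u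
  obtain ⟨g, hg⟩ := F.exists_component_ne_zero (x := a j) (by exact_mod_cast haj)
  refine ⟨g * h ^ j, s, fun i ↦ F.component (g * h ^ j * (h ^ i)⁻¹) (a i),
    fun i ↦ ⟨hL.isHomogeneous _ (a i).2, F.component_mem _ _⟩, ?_, j, hj, by simpa using hg⟩
  have hterm : ∀ i, F.component (g * h ^ j * (h ^ i)⁻¹) (a i) * u ^ i =
      F.component (g * h ^ j) (a i * u ^ i) := fun i ↦ by
    simpa using (F.component_mul_of_mem (F.pow_mem hu i) (g * h ^ j * (h ^ i)⁻¹) (a i)).symm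
  rw [Finset.sum_congr rfl fun i _ ↦ hterm i]
  simp only [← componentHom_apply]
  rw [← map_sum, hsum, map_zero]

theorem exists_pow_eq_mul_unit {L : Subring K} (hL : F.IsGradedSubfield L)
    (hfin : Module.rank L K < Cardinal.aleph0) {B : Subring K} (hB : F.IsValuativeOnOne B)
    {h : H} {u : K} (hu : u ∈ F.comp h) (hu0 : u ≠ 0) :
    ∃ n, 0 < n ∧ ∃ z ∈ L, F.Homogeneous z ∧ z ≠ 0 ∧ ∃ w ∈ B, w⁻¹ʳ ∈ B ∧ u ^ n = z * w := by
  obtain ⟨e, s, b, hb, hsum, j, hj, hbj⟩ :=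
    F.exists_homogeneous_sum_mul_pow_eq_zero hL.graded hfin hu
  have hterm : ∀ i, b i * u ^ i ∈ F.comp e := fun i ↦ by
    simpa using F.mul_mem (hb i).2 (F.pow_mem hu i)
  have huu := F.isUnit_of_mem hu hu0
  obtain ⟨k, -, l, -, hkl, htk, htl, hw, hw'⟩ :=
    exists_ne_mul_inverse_mem_of_sum_eq_zero hB s (fun i _ ↦ hterm i) hsum
      ⟨j, hj, F.ne_zero_of_isUnit ((F.isUnit_of_mem (hb j).2 hbj).mul (huu.pow j))⟩
  wlog hlk : l < k generalizing k l
  · exact this l k hkl.symm htl htk hw' hw (by omega)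
  have hbk := F.isUnit_of_mem (hb k).2 (left_ne_zero_of_mul htk)
  have hbl := F.isUnit_of_mem (hb l).2 (left_ne_zero_of_mul htl)
  have hul := huu.pow l
  -- `u ^ (k - l) = (b l / b k) * (b k * u ^ k / (b l * u ^ l))`
  refine ⟨k - l, by omega, b l * (b k)⁻¹ʳ,
    L.mul_mem (hb l).1 (hL.inv_mem _ (hb k).1 ⟨_, (hb k).2⟩ (F.ne_zero_of_isUnit hbk)),
    ⟨_, F.mul_mem (hb l).2 (F.inverse_mem (hb k).2)⟩,
    F.ne_zero_of_isUnit (hbl.mul hbk.ringInverse), _, hw,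
    by rwa [Ring.inverse_mul_inverse _ (F.isUnit_of_mem (hterm l) htl)], ?_⟩
  have hk : u ^ k = u ^ (k - l) * u ^ l := by rw [← pow_add, Nat.sub_add_cancel hlk.le]
  calc u ^ (k - l)
      = u ^ (k - l) * (b l * (b l)⁻¹ʳ) * ((b k)⁻¹ʳ * b k) * (u ^ l * (u ^ l)⁻¹ʳ) := by
        rw [Ring.mul_inverse_cancel _ hbl, Ring.inverse_mul_cancel _ hbk,
          Ring.mul_inverse_cancel _ hul, mul_one, mul_one, mul_one]
    _ = b l * (b k)⁻¹ʳ * (b k * u ^ k * (b l * u ^ l)⁻¹ʳ) := by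
        rw [hk, Ring.mul_inverse_rev]; ring

variable {F} in
theorem IsGradedValRing.isValuativeOnOne_inf_oneComponent {A : Subring K}
    (hA : F.IsGradedValRing ⊤ A) : F.IsValuativeOnOne (A ⊓ F.oneComponent) := fun x hx hx0 ↦
  have hinv : x⁻¹ʳ ∈ F.oneComponent := F.mem_oneComponent.2 (by simpa using F.inverse_mem hx)
  (hA.2.2 x trivial ⟨1, hx⟩ hx0).imp (⟨·, hx⟩) (⟨·, hinv⟩)

variable {F} in
theorem IsGradedValRing.le_of_inf_le {L A A' : Subring K} (hL : F.IsGradedSubfield L)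
    (hfin : Module.rank L K < Cardinal.aleph0) (hA : F.IsGradedValRing ⊤ A)
    (hA' : F.IsGradedValRing ⊤ A') (hAL : A ⊓ L ≤ A') (hA1 : A ⊓ F.oneComponent ≤ A') :
    A ≤ A' := by
  refine hA.2.1.le_of_forall_mem_comp fun h u hu huA ↦ ?_
  by_cases hu0 : u = 0
  · rw [hu0]
    exact A'.zero_mem
  obtain ⟨n, hn, z, hzL, -, -, w, hwA, hwA', huzw⟩ :=
    F.exists_pow_eq_mul_unit hL hfin hA.isValuativeOnOne_inf_oneComponent hu hu0
  have huu := F.isUnit_of_mem hu hu0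
  have hwu : IsUnit w := isUnit_of_mul_isUnit_right (huzw ▸ huu.pow n)
  have hz : z = u ^ n * w⁻¹ʳ := (Ring.eq_mul_inverse_iff_mul_eq _ _ _ hwu).2 huzw.symm
  have hzA' : z ∈ A' := hAL ⟨hz ▸ A.mul_mem (A.pow_mem huA n) hwA'.1, hzL⟩
  refine (hA'.2.2 u trivial ⟨h, hu⟩ hu0).elim id (A'.mem_of_pow_mem_of_inverse_mem huu hn ?_)
  rw [huzw]
  exact A'.mul_mem hzA' (hA1 hwA)

/-- Its homogeneous elements are those of the graded valuation ring extending `R` with identity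
component `B`. -/
def extensionSet (R B : Subring K) : Set K :=
  {u | ∃ n, 0 < n ∧ ∃ z ∈ R, F.Homogeneous z ∧ ∃ w ∈ B, u ^ n = z * w}

section extensionSet

variable {F} {R B : Subring K}

theorem mul_mem_extensionSet {u v : K} (hu : u ∈ F.extensionSet R B)
    (hv : v ∈ F.extensionSet R B) : u * v ∈ F.extensionSet R B := by
  obtain ⟨n, hn, z, hzR, hz, w, hwB, huzw⟩ := hu
  obtain ⟨m, hm, z', hz'R, hz', w', hw'B, hvzw⟩ := hv
  refine ⟨n * m, Nat.mul_pos hn hm, z ^ m * z' ^ n, R.mul_mem (R.pow_mem hzR m) (R.pow_mem hz'R n),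
    (hz.pow m).mul (hz'.pow n), w ^ m * w' ^ n, B.mul_mem (B.pow_mem hwB m) (B.pow_mem hw'B n), ?_⟩
  rw [mul_pow, pow_mul, huzw, mul_comm n m, pow_mul, hvzw]
  ring

theorem mem_extensionSet_of_mem_left {z : K} (hzR : z ∈ R) (hz : F.Homogeneous z) :
    z ∈ F.extensionSet R B :=
  ⟨1, one_pos, z, hzR, hz, 1, B.one_mem, by rw [pow_one, mul_one]⟩

theorem mem_extensionSet_of_mem_right {w : K} (hwB : w ∈ B) : w ∈ F.extensionSet R B :=
  ⟨1, one_pos, 1, R.one_mem, ⟨1, F.one_mem⟩, w, hwB, by rw [pow_one, one_mul]⟩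

theorem add_mem_extensionSet_of_mul_inverse_mem {p q : K} (hp : IsUnit p)
    (hpS : p ∈ F.extensionSet R B) (hq : q * p⁻¹ʳ ∈ B) : p + q ∈ F.extensionSet R B := by
  have hpq : p + q = p * (1 + q * p⁻¹ʳ) := by
    rw [mul_add, mul_one, mul_left_comm, Ring.mul_inverse_cancel _ hp, mul_one]
  rw [hpq]
  exact mul_mem_extensionSet hpS (mem_extensionSet_of_mem_right (B.add_mem B.one_mem hq))

theorem add_mem_extensionSet (hB : F.IsValuativeOnOne B) {g : H} {p q : K} (hp : p ∈ F.comp g)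
    (hq : q ∈ F.comp g) (hpS : p ∈ F.extensionSet R B) (hqS : q ∈ F.extensionSet R B) :
    p + q ∈ F.extensionSet R B := by
  by_cases hp0 : p = 0
  · rwa [hp0, zero_add]
  by_cases hq0 : q = 0
  · rwa [hq0, add_zero]
  have hup := F.isUnit_of_mem hp hp0
  have huq := F.isUnit_of_mem hq hq0
  rcases hB _ (F.mul_inverse_mem_one hq hp) (F.ne_zero_of_isUnit (huq.mul hup.ringInverse))
    with h | h
  · exact add_mem_extensionSet_of_mul_inverse_mem hup hpS h
  · rw [Ring.inverse_mul_inverse _ hup] at h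
    rw [add_comm]
    exact add_mem_extensionSet_of_mul_inverse_mem huq hqS h

end extensionSet

def extensionComponent (R : Subring K) {B : Subring K} (hB : F.IsValuativeOnOne B) (g : H) :
    AddSubgroup K where
  carrier := F.comp g ∩ F.extensionSet R B
  zero_mem' := ⟨zero_mem _, mem_extensionSet_of_mem_right B.zero_mem⟩
  add_mem' hp hq := ⟨add_mem hp.1 hq.1, add_mem_extensionSet hB hp.1 hq.1 hp.2 hq.2⟩
  neg_mem' hp := ⟨neg_mem hp.1, by
    simpa using mul_mem_extensionSet hp.2 (mem_extensionSet_of_mem_right (B.neg_mem B.one_mem))⟩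

noncomputable def extension (R : Subring K) {B : Subring K} (hB : F.IsValuativeOnOne B) :
    Subring K :=
  F.subringOfComponents (F.extensionComponent R hB) (fun _ _ hx ↦ hx.1)
    ⟨F.one_mem, mem_extensionSet_of_mem_right B.one_mem⟩
    (fun _ _ _ _ hx hy ↦ ⟨F.mul_mem hx.1 hy.1, mul_mem_extensionSet hx.2 hy.2⟩)

section extension

variable {F} {L R B : Subring K} (hB : F.IsValuativeOnOne B)

theorem mem_extension_of_mem {g : H} {x : K} (hx : x ∈ F.comp g) :
    x ∈ F.extension R hB ↔ x ∈ F.extensionSet R B :=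
  (mem_subringOfComponents_of_mem hx).trans ⟨And.right, And.intro hx⟩

theorem isGradedValRing_extension (hL : F.IsGradedSubfield L)
    (hfin : Module.rank L K < Cardinal.aleph0) (hR : F.IsGradedValRing L R) :
    F.IsGradedValRing ⊤ (F.extension R hB) := by
  refine ⟨le_top, isGradedSubring_subringOfComponents, fun u _ ⟨h, hu⟩ hu0 ↦ ?_⟩
  obtain ⟨n, hn, z, hzL, hz, hz0, w, hwB, hwB', huzw⟩ := F.exists_pow_eq_mul_unit hL hfin hB hu hu0
  rcases hR.2.2 z hzL hz hz0 with hzR | hzR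
  · exact .inl ((mem_extension_of_mem hB hu).2 ⟨n, hn, z, hzR, hz, w, hwB, huzw⟩)
  · obtain ⟨g, hzg⟩ := hz
    refine .inr ((mem_extension_of_mem hB (F.inverse_mem hu)).2
      ⟨n, hn, z⁻¹ʳ, hzR, ⟨_, F.inverse_mem hzg⟩, w⁻¹ʳ, hwB', ?_⟩)
    rw [Ring.inverse_pow, huzw, Ring.mul_inverse_rev, mul_comm]

theorem extension_inf_eq (hL : F.IsGradedSubfield L) (hR : F.IsGradedValRing L R)
    (hB1 : B ≤ F.oneComponent) (hBR : B ⊓ (F.oneComponent ⊓ L) ≤ R) :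
    F.extension R hB ⊓ L = R := by
  have hmem : ∀ g, ∀ y ∈ F.comp g, y ∈ L → y ∈ F.extensionSet R B → y ∈ R := by
    intro g y hy hyL ⟨n, hn, z, hzR, hz, w, hwB, hyzw⟩
    by_cases hy0 : y = 0
    · rw [hy0]
      exact R.zero_mem
    have huy := F.isUnit_of_mem hy hy0
    have hzu : IsUnit z := isUnit_of_mul_isUnit_left (hyzw ▸ huy.pow n)
    have hw : z⁻¹ʳ * y ^ n = w := (Ring.inverse_mul_eq_iff_eq_mul z _ w hzu).2 hyzw
    have hwR : w ∈ R := hBR ⟨hwB, hB1 hwB, hw ▸ L.mul_mem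
      (hL.inv_mem z (hR.1 hzR) hz (F.ne_zero_of_isUnit hzu)) (L.pow_mem hyL n)⟩
    refine (hR.2.2 y hyL ⟨g, hy⟩ hy0).elim id (R.mem_of_pow_mem_of_inverse_mem huy hn ?_)
    rw [hyzw]
    exact R.mul_mem hzR hwR
  refine le_antisymm (fun x hx ↦ ?_) fun x hx ↦ ⟨?_, hR.1 hx⟩
  · obtain ⟨hxA, hxL⟩ := hx
    obtain ⟨s, hs⟩ := F.sum_component x
    rw [← hs]
    exact sum_mem fun g _ ↦ hmem g _ (F.component_mem g x) (hL.graded.isHomogeneous g hxL)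
      ((mem_extension_of_mem hB (F.component_mem g x)).1
        (isGradedSubring_subringOfComponents.isHomogeneous g hxA))
  · refine hR.2.1.le_of_forall_mem_comp (fun g z hz hzR ↦ ?_) hx
    exact (mem_extension_of_mem hB hz).2 (mem_extensionSet_of_mem_left hzR ⟨g, hz⟩)

theorem extension_inf_oneComponent (hB1 : B ≤ F.oneComponent)
    (hRB : R ⊓ F.oneComponent ≤ B) : F.extension R hB ⊓ F.oneComponent = B := by
  refine le_antisymm (fun x hx ↦ ?_) fun x hx ↦
    ⟨(mem_extension_of_mem hB (hB1 hx)).2 (mem_extensionSet_of_mem_right hx), hB1 hx⟩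
  obtain ⟨hxA, hx⟩ := hx
  obtain ⟨n, hn, z, hzR, -, w, hwB, hxzw⟩ := (mem_extension_of_mem hB hx).1 hxA
  by_cases hx0 : x = 0
  · rw [hx0]
    exact B.zero_mem
  have hux := F.isUnit_of_mem hx hx0
  have hwu : IsUnit w := isUnit_of_mul_isUnit_right (hxzw ▸ hux.pow n)
  have hz : z = x ^ n * w⁻¹ʳ := (Ring.eq_mul_inverse_iff_mul_eq _ _ _ hwu).2 hxzw.symm
  have hzB : z ∈ B :=
    hRB ⟨hzR, hz ▸ F.mul_inverse_mem_one (by simpa using F.pow_mem hx n) (hB1 hwB)⟩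
  refine (hB x hx hx0).elim id (B.mem_of_pow_mem_of_inverse_mem hux hn ?_)
  rw [hxzw]
  exact B.mul_mem hzB hwB

end extension

end GradedField

/-- Let `K/L` be a finite extension of `H`-graded fields and `R` a graded valuation ring of
`L`.  Then `A ↦ A₁ = A ∩ K₁` is a bijection from graded valuation rings of `K` extending `R`
to valuation rings of the field `K₁` extending `R₁ = R ∩ L₁`; moreover for `R ⊆ R'` with
respective extensions `A`, `A'`, one has `A ⊆ A'` iff `A₁ ⊆ A'₁`. -/
theorem GradedField.extension_bijection_oneComponent {H : Type*} [CommGroup H]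
    [DecidableEq H] {K : Type*} [CommRing K] (F : GradedField H K) (L : Subring K)
    (hL : F.IsGradedSubfield L) (hfin : Module.rank ↥L K < Cardinal.aleph0)
    (R : Subring K) (hR : F.IsGradedValRing L R) :
    -- `A ↦ A₁` lands in valuation rings of `K₁` extending `R₁`
    (∀ A : Subring K, F.IsGradedValRing ⊤ A ∧ A ⊓ L = R →
      (A ⊓ F.oneComponent ≤ F.oneComponent ∧
        (∀ x ∈ F.oneComponent, x ≠ 0 → x ∈ A ⊓ F.oneComponent ∨
          Ring.inverse x ∈ A ⊓ F.oneComponent) ∧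
        (A ⊓ F.oneComponent) ⊓ (F.oneComponent ⊓ L) = R ⊓ F.oneComponent)) ∧
    -- injectivity
    (∀ A A' : Subring K, F.IsGradedValRing ⊤ A ∧ A ⊓ L = R →
      F.IsGradedValRing ⊤ A' ∧ A' ⊓ L = R →
      A ⊓ F.oneComponent = A' ⊓ F.oneComponent → A = A') ∧
    -- surjectivity
    (∀ B : Subring K, B ≤ F.oneComponent →
      (∀ x ∈ F.oneComponent, x ≠ 0 → x ∈ B ∨ Ring.inverse x ∈ B) →
      B ⊓ (F.oneComponent ⊓ L) = R ⊓ F.oneComponent →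
      ∃ A : Subring K, (F.IsGradedValRing ⊤ A ∧ A ⊓ L = R) ∧ A ⊓ F.oneComponent = B) ∧
    -- monotonicity is detected on identity components
    (∀ R' : Subring K, F.IsGradedValRing L R' → R ≤ R' →
      ∀ A A' : Subring K, F.IsGradedValRing ⊤ A ∧ A ⊓ L = R →
        F.IsGradedValRing ⊤ A' ∧ A' ⊓ L = R' →
        (A ≤ A' ↔ A ⊓ F.oneComponent ≤ A' ⊓ F.oneComponent)) := by
  have hle : ∀ {A A'}, F.IsGradedValRing ⊤ A ∧ A ⊓ L = R → F.IsGradedValRing ⊤ A' →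
      R ≤ A' → A ⊓ F.oneComponent ≤ A' ⊓ F.oneComponent → A ≤ A' :=
    fun ⟨hA, hAL⟩ hA' hRA' h1 ↦ hA.le_of_inf_le hL hfin hA' (hAL ▸ hRA') (h1.trans inf_le_left)
  refine ⟨fun A ⟨hA, hAL⟩ ↦ ⟨inf_le_right, hA.isValuativeOnOne_inf_oneComponent, ?_⟩,
    fun A A' hA hA' h1 ↦ le_antisymm (hle hA hA'.1 (hA'.2 ▸ inf_le_left) h1.le)
      (hle hA' hA.1 (hA.2 ▸ inf_le_left) h1.ge),
    fun B hB1 hB hBR ↦ ⟨F.extension R hB, ⟨isGradedValRing_extension hB hL hfin hR,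
      extension_inf_eq hB hL hR hB1 (hBR.le.trans inf_le_left)⟩,
      extension_inf_oneComponent hB hB1 (hBR.ge.trans inf_le_left)⟩,
    fun R' _ hRR' A A' hA hA' ↦
      ⟨(inf_le_inf_right _ ·), hle hA hA'.1 (hRR'.trans (hA'.2 ▸ inf_le_left))⟩⟩
  rw [← hAL]
  ext x
  simp only [Subring.mem_inf]
  tauto
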